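/- Let H be a Hilbert space, (H_i)_{i ∈ ℕ} a family of mutually orthogonal closed subspaces of H, and T ∈ B(H). Suppose there are c > 0 and, for every i, the restriction norm satisfies ‖P_{H_i} T P_{H_i}‖ ≥ c, where P_{H_i} is the orthogonal projection onto H_i. Then for every finite-rank operator x whose range and co-kernel are supported in finitely many of the H_i (i.e. there is a finite set F with ker(x)^⊥ ⊆ ⊕_{i∈F} H_i), one has ‖T + x‖ ≥ c. -/

import Mathlib

/-!
Pick an index `j ∉ F`. Then `V j` is orthogonal to `⨆ i ∈ F, V i ⊇ (ker x)ᗮ`, so `V j ⊆ ker x`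
because `ker x` is closed. Hence `T + x` and `T` have the same compression to `V j`, and a
compression `P_K T P_K` does not increase the norm:
`c ≤ ‖P_{V j} T P_{V j}‖ = ‖P_{V j} (T + x) P_{V j}‖ ≤ ‖T + x‖`.
-/

namespace Submodule

variable {𝕜 E : Type*} [RCLike 𝕜] [NormedAddCommGroup E] [InnerProductSpace 𝕜 E]

theorem iSup_isOrtho_of_notMem {ι : Type*} {V : ι → Submodule 𝕜 E}
    (hV : Pairwise fun i j ↦ V i ⟂ V j) {s : Finset ι} {j : ι} (hj : j ∉ s) :
    (⨆ i ∈ s, V i) ⟂ V j :=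
  isOrtho_iSup_left.2 fun _ ↦ isOrtho_iSup_left.2 fun hi ↦ hV fun hij ↦ hj (hij ▸ hi)

noncomputable def compression (K : Submodule 𝕜 E) [K.HasOrthogonalProjection] (T : E →L[𝕜] E) :
    K →L[𝕜] K :=
  K.orthogonalProjectionOnto.comp (T.comp K.subtypeL)

variable (K : Submodule 𝕜 E) [K.HasOrthogonalProjection]

theorem norm_compression_le (T : E →L[𝕜] E) : ‖K.compression T‖ ≤ ‖T‖ :=
  calc ‖K.compression T‖ ≤ ‖K.orthogonalProjectionOnto‖ * (‖T‖ * ‖K.subtypeL‖) :=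
        (ContinuousLinearMap.opNorm_comp_le _ _).trans
          (by gcongr; exact ContinuousLinearMap.opNorm_comp_le _ _)
    _ ≤ 1 * (‖T‖ * 1) := by
        gcongr
        · exact K.orthogonalProjectionOnto_norm_le
        · exact K.norm_subtypeL_le
    _ = ‖T‖ := by ring

theorem compression_add_of_le_ker {T x : E →L[𝕜] E} (hx : K ≤ LinearMap.ker (x : E →ₗ[𝕜] E)) :
    K.compression (T + x) = K.compression T := by
  ext v
  simp [compression, show x v = 0 from hx v.2]

end Submodule

theorem norm_add_finite_rank_ge_general {H : Type*} [NormedAddCommGroup H]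
    [InnerProductSpace ℂ H] [CompleteSpace H]
    (V : ℕ → Submodule ℂ H) [∀ i, CompleteSpace (V i)]
    (horth : ∀ i j, i ≠ j → ∀ u ∈ V i, ∀ v ∈ V j, (inner ℂ u v : ℂ) = 0)
    (T : H →L[ℂ] H) (c : ℝ)
    (hT : ∀ i, c ≤ ‖(V i).orthogonalProjectionOnto.comp (T.comp (V i).subtypeL)‖)
    (x : H →L[ℂ] H)
    (F : Finset ℕ) (hker : (LinearMap.ker (x : H →ₗ[ℂ] H))ᗮ ≤ ⨆ i ∈ F, V i) :
    c ≤ ‖T + x‖ := by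
  obtain ⟨j, hj⟩ := Infinite.exists_notMem_finset F
  have : CompleteSpace (LinearMap.ker (x : H →ₗ[ℂ] H)) := x.isClosed_ker.completeSpace_coe
  have hVj : V j ≤ LinearMap.ker (x : H →ₗ[ℂ] H) :=
    Submodule.orthogonal_le_orthogonal_iff.1 <| hker.trans <|
      Submodule.iSup_isOrtho_of_notMem (fun i k hik ↦ Submodule.isOrtho_iff_inner_eq.2
        (horth i k hik)) hj
  calc c ≤ ‖(V j).compression T‖ := hT j
    _ = ‖(V j).compression (T + x)‖ := by rw [Submodule.compression_add_of_le_ker _ hVj]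
    _ ≤ ‖T + x‖ := (V j).norm_compression_le _

/-- Let `(V i)` be mutually orthogonal closed subspaces of a Hilbert space `H` and
`T ∈ B(H)` with `‖P_{V i} T P_{V i}‖ ≥ c` for all `i`. Then for every finite-rank
operator `x` with `(ker x)ᗮ ⊆ ⊕_{i ∈ F} V i` for some finite `F`, one has `‖T + x‖ ≥ c`. -/
theorem norm_add_finite_rank_ge {H : Type*} [NormedAddCommGroup H]
    [InnerProductSpace ℂ H] [CompleteSpace H]
    (V : ℕ → Submodule ℂ H) [∀ i, CompleteSpace (V i)]
    (horth : ∀ i j, i ≠ j → ∀ u ∈ V i, ∀ v ∈ V j, (inner ℂ u v : ℂ) = 0)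
    (T : H →L[ℂ] H) (c : ℝ) (hc : 0 < c)
    (hT : ∀ i, c ≤ ‖(V i).orthogonalProjectionOnto.comp (T.comp (V i).subtypeL)‖)
    (x : H →L[ℂ] H) (hfr : FiniteDimensional ℂ (LinearMap.range (x : H →ₗ[ℂ] H)))
    (F : Finset ℕ) (hker : (LinearMap.ker (x : H →ₗ[ℂ] H))ᗮ ≤ ⨆ i ∈ F, V i) :
    c ≤ ‖T + x‖ :=
  norm_add_finite_rank_ge_general V horth T c hT x F hker
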